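/- arXiv:1003.3529 — 9 statements merged into one kernel-verified Lean document; each statement's English description precedes it below -/
import Mathlib

section
/- For any two smooth time-dependent vector fields X, Y on ℝⁿ and any integer m ≥ 0, the Lie bracket [X̃, Ỹ] of their time-prolongations to ℝ × (ℝⁿ)^{m+1} is the prolongation Ẑ of a time-dependent vector field Z on ℝⁿ; explicitly, one may take Z(t,x) = ∂Y/∂t(t,x) − ∂X/∂t(t,x) + D_xY(t,x)·X(t,x) − D_xX(t,x)·Y(t,x). -/
/-- The prolongation of a time-dependent vector field `X` on `ℝⁿ` to `ℝ × (ℝⁿ)^{m+1}`: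
`X̂(t,x₀,…,x_m) = (0, X(t,x₀), …, X(t,x_m))`. -/
def prolong (n m : ℕ) (X : ℝ × (Fin n → ℝ) → (Fin n → ℝ)) :
    (ℝ × (Fin (m + 1) → Fin n → ℝ)) → ℝ × (Fin (m + 1) → Fin n → ℝ) :=
  fun p => (0, fun a => X (p.1, p.2 a))

/-- The time-prolongation of a time-dependent vector field `X` on `ℝⁿ` to `ℝ × (ℝⁿ)^{m+1}`:
`X̃(t,x₀,…,x_m) = (1, X(t,x₀), …, X(t,x_m))`. -/
def timeProlong (n m : ℕ) (X : ℝ × (Fin n → ℝ) → (Fin n → ℝ)) :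
    (ℝ × (Fin (m + 1) → Fin n → ℝ)) → ℝ × (Fin (m + 1) → Fin n → ℝ) :=
  fun p => (1, fun a => X (p.1, p.2 a))

/-- The Lie bracket of vector fields: `[A,B](p) = DB(p)·A(p) − DA(p)·B(p)`. -/
noncomputable def lieBr {E : Type*} [NormedAddCommGroup E] [NormedSpace ℝ E] (A B : E → E) : E → E :=
  fun p => fderiv ℝ B p (A p) - fderiv ℝ A p (B p)

/-!
A time-prolongation has constant `t`-component, so its derivative has zero `t`-component and
acts on each copy `x_a` through `DX(t, x_a)`. Hence `[X̃, Ỹ]` has zero `t`-component, its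
`a`-th component is `DY·(1, X) − DX·(1, Y)`, and splitting `(1, X) = (1, 0) + (0, X)`
separates the time derivatives from the spatial bracket.
-/

open ContinuousLinearMap

section

variable {𝕜 : Type*} [NontriviallyNormedField 𝕜] {ι T E F G : Type*} [Fintype ι]
  [NormedAddCommGroup T] [NormedSpace 𝕜 T] [NormedAddCommGroup E] [NormedSpace 𝕜 E]
  [NormedAddCommGroup F] [NormedSpace 𝕜 F] [NormedAddCommGroup G] [NormedSpace 𝕜 G]

theorem hasFDerivAt_prodMk_const_pi {X : T × E → F} {p : T × (ι → E)}
    (hX : ∀ a, DifferentiableAt 𝕜 X (p.1, p.2 a)) (c : G) :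
    HasFDerivAt (fun q : T × (ι → E) => (c, fun a => X (q.1, q.2 a)))
      ((0 : T × (ι → E) →L[𝕜] G).prod (pi fun a =>
        (fderiv 𝕜 X (p.1, p.2 a)).comp ((fst 𝕜 T _).prod ((proj a).comp (snd 𝕜 T _))))) p :=
  (hasFDerivAt_const c p).prodMk <| hasFDerivAt_pi.2 fun a =>
    (hX a).hasFDerivAt.comp p ((fst 𝕜 T (ι → E)).prod ((proj a).comp (snd 𝕜 T _))).hasFDerivAt

theorem fderiv_prodMk_const_pi_apply {X : T × E → F} {p : T × (ι → E)}
    (hX : ∀ a, DifferentiableAt 𝕜 X (p.1, p.2 a)) (c : G) (v : T × (ι → E)) :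
    fderiv 𝕜 (fun q : T × (ι → E) => (c, fun a => X (q.1, q.2 a))) p v =
      (0, fun a => fderiv 𝕜 X (p.1, p.2 a) (v.1, v.2 a)) := by
  rw [(hasFDerivAt_prodMk_const_pi hX c).fderiv]
  rfl

theorem ContinuousLinearMap.map_prodMk_eq_add (L : T × E →L[𝕜] F) (t : T) (x : E) :
    L (t, x) = L (t, 0) + L (0, x) := by
  rw [← map_add, Prod.mk_add_mk, add_zero, zero_add]

end

theorem fderiv_timeProlong_apply {n m : ℕ} {X : ℝ × (Fin n → ℝ) → (Fin n → ℝ)}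
    (hX : Differentiable ℝ X) (p v : ℝ × (Fin (m + 1) → Fin n → ℝ)) :
    fderiv ℝ (timeProlong n m X) p v = (0, fun a => fderiv ℝ X (p.1, p.2 a) (v.1, v.2 a)) :=
  fderiv_prodMk_const_pi_apply (fun _ => hX _) 1 v

/-- The Lie bracket `[X̃, Ỹ]` of the time-prolongations of two smooth time-dependent vector
fields `X`, `Y` on `ℝⁿ` is the prolongation `Ẑ` of the time-dependent vector field
`Z(t,x) = ∂Y/∂t(t,x) − ∂X/∂t(t,x) + D_xY(t,x)·X(t,x) − D_xX(t,x)·Y(t,x)`. -/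
theorem lieBracket_timeProlong_eq_prolong (n m : ℕ)
    (X Y : ℝ × (Fin n → ℝ) → (Fin n → ℝ))
    (hX : ContDiff ℝ (⊤ : ℕ∞) X) (hY : ContDiff ℝ (⊤ : ℕ∞) Y) :
    lieBr (timeProlong n m X) (timeProlong n m Y) =
      prolong n m (fun q =>
        fderiv ℝ Y q (1, 0) - fderiv ℝ X q (1, 0)
          + fderiv ℝ Y q (0, X q) - fderiv ℝ X q (0, Y q)) := by
  funext p
  simp only [lieBr, fderiv_timeProlong_apply (hX.differentiable (by simp)),
    fderiv_timeProlong_apply (hY.differentiable (by simp))]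
  refine Prod.ext (sub_zero 0) (funext fun a => ?_)
  simp only [timeProlong, prolong, Prod.snd_sub, Pi.sub_apply]
  rw [map_prodMk_eq_add (fderiv ℝ Y _), map_prodMk_eq_add (fderiv ℝ X _)]
  abel
end

section
/- Let Y₁, …, Y_r be smooth time-dependent vector fields on ℝⁿ, let m ≥ 1, and let π : ℝ × (ℝⁿ)^{m+1} → ℝ × (ℝⁿ)^m be the projection forgetting the x₀ block. Assume that at every point (t, x₁, …, x_m) ∈ ℝ × (ℝⁿ)^m the r vectors (1, Y_j(t,x₁), …, Y_j(t,x_m)) ∈ ℝ^{1+nm}, j = 1,…,r, are linearly independent. Then, for smooth functions b₁, …, b_r : ℝ × (ℝⁿ)^{m+1} → ℝ, the vector field ∑_{j=1}^r b_j Ỹ_j equals the prolongation Ŷ of some time-dependent vector field Y on ℝⁿ if and only if each b_j is a function of t only and ∑_{j=1}^r b_j ≡ 0. -/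
/-- Let `Y₁, …, Y_r` be smooth time-dependent vector fields on `ℝⁿ` and `m ≥ 1`.  Suppose
that at every point `(t, x₁, …, x_m)` of `ℝ × (ℝⁿ)^m` the projections
`(1, Y_j(t,x₁), …, Y_j(t,x_m))`, `j = 1,…,r`, are linearly independent.  Then, for smooth
functions `b₁, …, b_r` on `ℝ × (ℝⁿ)^{m+1}`, the vector field `∑_j b_j Ỹ_j` is the
prolongation `Ŷ` of some time-dependent vector field `Y` on `ℝⁿ` if and only if each `b_j`
is a function of `t` only and `∑_j b_j ≡ 0`. -/
theorem sum_smul_timeProlong_eq_prolong_iff (n r m : ℕ) (hm : 1 ≤ m)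
    (Y : Fin r → ℝ × (Fin n → ℝ) → Fin n → ℝ)
    (hY : ∀ j, ContDiff ℝ (⊤ : ℕ∞) (Y j))
    (hind : ∀ (t : ℝ) (x : Fin m → Fin n → ℝ),
      LinearIndependent ℝ (fun j : Fin r =>
        (((1 : ℝ), fun a => Y j (t, x a)) : ℝ × (Fin m → Fin n → ℝ))))
    (b : Fin r → ℝ × (Fin (m + 1) → Fin n → ℝ) → ℝ)
    (hb : ∀ j, ContDiff ℝ (⊤ : ℕ∞) (b j)) :
    (∃ Y₀ : ℝ × (Fin n → ℝ) → Fin n → ℝ, ContDiff ℝ (⊤ : ℕ∞) Y₀ ∧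
        ∀ p, (∑ j, b j p • timeProlong n m (Y j) p) = prolong n m Y₀ p)
      ↔
    (∃ β : Fin r → ℝ → ℝ, (∀ j p, b j p = β j p.1) ∧ ∀ t, ∑ j, β j t = 0) := by
  constructor
  · rintro ⟨Y₀, hY₀, h⟩
    have hfst : ∀ p, ∑ j, b j p = 0 := by
      intro p
      have := congrArg Prod.fst (h p)
      simpa [timeProlong, prolong, Prod.fst_sum, smul_eq_mul] using this
    have hsnd : ∀ p (a : Fin (m+1)),
        ∑ j, b j p • Y j (p.1, p.2 a) = Y₀ (p.1, p.2 a) := by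
      intro p a
      have := congrArg (fun z : ℝ × (Fin (m+1) → Fin n → ℝ) => z.2 a) (h p)
      simpa [timeProlong, prolong, Prod.snd_sum, Finset.sum_apply] using this
    have sumv : ∀ (p : ℝ × (Fin (m+1) → Fin n → ℝ)) (σ : Fin m → Fin (m+1)),
        ∑ j, b j p • (((1 : ℝ), fun i => Y j (p.1, p.2 (σ i))) : ℝ × (Fin m → Fin n → ℝ))
          = (0, fun i => Y₀ (p.1, p.2 (σ i))) := by
      intro p σ
      refine Prod.ext ?_ ?_
      · simpa [Prod.fst_sum, smul_eq_mul] using hfst p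
      · funext i
        simpa [Prod.snd_sum, Finset.sum_apply] using hsnd p (σ i)
    have step : ∀ (p q : ℝ × (Fin (m+1) → Fin n → ℝ)) (a : Fin (m+1)),
        p.1 = q.1 → (∀ i, i ≠ a → p.2 i = q.2 i) → ∀ j, b j p = b j q := by
      intro p q a hpq hne j
      have hqx : ∀ i : Fin m, q.2 (a.succAbove i) = p.2 (a.succAbove i) :=
        fun i => (hne _ (Fin.succAbove_ne a i)).symm
      have hg := Fintype.linearIndependent_iff.mp
        (hind p.1 (fun i => p.2 (a.succAbove i))) (fun j => b j p - b j q) ?_ j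
      · linarith
      · have e1 := sumv p a.succAbove
        have e2 := sumv q a.succAbove
        rw [← hpq] at e2
        simp only [hqx] at e2
        have hd : ∑ j, (b j p - b j q) •
              (((1 : ℝ), fun i => Y j (p.1, p.2 (a.succAbove i))) : ℝ × (Fin m → Fin n → ℝ))
            = (∑ j, b j p •
                (((1 : ℝ), fun i => Y j (p.1, p.2 (a.succAbove i))) : ℝ × (Fin m → Fin n → ℝ)))
              - ∑ j, b j q •
                (((1 : ℝ), fun i => Y j (p.1, p.2 (a.succAbove i))) : ℝ × (Fin m → Fin n → ℝ)) := by
          rw [← Finset.sum_sub_distrib]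
          exact Finset.sum_congr rfl fun j _ => sub_smul _ _ _
        rw [hd, e1, e2, sub_self]
    have hconst : ∀ (t : ℝ) (x y : Fin (m+1) → Fin n → ℝ) j,
        b j (t, x) = b j (t, y) := by
      intro t x y j
      have chain : ∀ k : ℕ,
          b j (t, fun i => if (i : ℕ) < k then y i else x i) = b j (t, x) := by
        intro k
        induction k with
        | zero => simp
        | succ k ih =>
          rcases lt_or_ge k (m+1) with hk | hk
          · have hs := step (t, fun i => if (i : ℕ) < k + 1 then y i else x i)
                (t, fun i => if (i : ℕ) < k then y i else x i) ⟨k, hk⟩ rfl ?_ j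
            · rw [hs, ih]
            · intro i hi
              have hik : (i : ℕ) ≠ k := fun h => hi (Fin.ext h)
              simp only
              rcases lt_or_ge (i : ℕ) k with h | h
              · simp [h, Nat.lt_succ_of_lt h]
              · have h' : ¬ (i : ℕ) < k := not_lt.mpr h
                have h'' : ¬ (i : ℕ) < k + 1 := by omega
                simp [h', h'']
          · have he : (fun i : Fin (m+1) => if (i : ℕ) < k + 1 then y i else x i)
                = fun i : Fin (m+1) => if (i : ℕ) < k then y i else x i := by
              funext i
              have h1 : (i : ℕ) < k := lt_of_lt_of_le i.isLt hk
              simp [h1, Nat.lt_succ_of_lt h1]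
            rw [he, ih]
      have := chain (m+1)
      have he : (fun i : Fin (m+1) => if (i : ℕ) < m + 1 then y i else x i) = y := by
        funext i; simp [i.isLt]
      rw [he] at this
      exact this.symm
    refine ⟨fun j t => b j (t, fun _ _ => 0), ?_, ?_⟩
    · intro j p
      exact hconst p.1 p.2 (fun _ _ => 0) j
    · intro t
      exact hfst (t, fun _ _ => 0)
  · rintro ⟨β, hβ, hsum⟩
    refine ⟨fun q => ∑ j, β j q.1 • Y j q, ?_, ?_⟩
    · apply ContDiff.sum
      intro j _
      have hβj : ContDiff ℝ (⊤ : ℕ∞) (fun q : ℝ × (Fin n → ℝ) => β j q.1) := by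
        have he : (fun q : ℝ × (Fin n → ℝ) => β j q.1)
            = fun q : ℝ × (Fin n → ℝ) => b j (q.1, fun _ _ => 0) := by
          funext q; rw [hβ j]
        rw [he]
        exact (hb j).comp (contDiff_fst.prodMk contDiff_const)
      exact hβj.smul (hY j)
    · intro p
      refine Prod.ext ?_ ?_
      · simp [timeProlong, prolong, Prod.fst_sum, smul_eq_mul, hβ, hsum p.1]
      · funext a
        simp [timeProlong, prolong, Prod.snd_sum, Finset.sum_apply, hβ]
end

section
/- Let Y₁, …, Y_r be smooth time-dependent vector fields on ℝⁿ, let m ≥ 1, and let π : ℝ × (ℝⁿ)^{m+1} → ℝ × (ℝⁿ)^m be the projection forgetting the x₀ block. Assume that at every point (t, x₁, …, x_m) ∈ ℝ × (ℝⁿ)^m the r vectors (1, Y_j(t,x₁), …, Y_j(t,x_m)) ∈ ℝ^{1+nm}, j = 1,…,r, are linearly independent. Then, for smooth functions b₁, …, b_r : ℝ × (ℝⁿ)^{m+1} → ℝ, the vector field ∑_{j=1}^r b_j Ỹ_j equals the time-prolongation Ỹ of some time-dependent vector field Y on ℝⁿ if and only if each b_j is a function of t only and ∑_{j=1}^r b_j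 ≡ 1. -/
theorem apply_eq_of_forall_update_eq {ι α β : Type*} [Fintype ι] [DecidableEq ι]
    {f : (ι → α) → β} (hf : ∀ x i a, f (Function.update x i a) = f x) (x y : ι → α) :
    f y = f x := by
  have piecewise_eq : ∀ s : Finset ι, f (s.piecewise y x) = f x := by
    intro s
    induction s using Finset.induction with
    | empty => simp
    | insert i s _ ih => rw [Finset.piecewise_insert, hf, ih]
  simpa using piecewise_eq Finset.univ

section TimeProlong

variable {n m r : ℕ}

def forgetBlock (k : Fin (m + 1)) :
    (ℝ × (Fin (m + 1) → Fin n → ℝ)) →ₗ[ℝ] ℝ × (Fin m → Fin n → ℝ) :=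
  LinearMap.prodMap LinearMap.id (LinearMap.funLeft ℝ (Fin n → ℝ) k.succAbove)

theorem forgetBlock_timeProlong (k : Fin (m + 1)) (X : ℝ × (Fin n → ℝ) → Fin n → ℝ)
    (t : ℝ) (x : Fin (m + 1) → Fin n → ℝ) :
    forgetBlock k (timeProlong n m X (t, x)) = (1, fun a => X (t, x (k.succAbove a))) :=
  rfl

theorem sum_eq_one_of_sum_smul_timeProlong_eq {Y : Fin r → ℝ × (Fin n → ℝ) → Fin n → ℝ}
    {Y₀ : ℝ × (Fin n → ℝ) → Fin n → ℝ} {c : Fin r → ℝ} {p : ℝ × (Fin (m + 1) → Fin n → ℝ)}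
    (h : ∑ j, c j • timeProlong n m (Y j) p = timeProlong n m Y₀ p) :
    ∑ j, c j = 1 := by
  simpa [timeProlong, Prod.fst_sum] using congrArg Prod.fst h

theorem coeff_update_eq_of_sum_smul_timeProlong_eq {Y : Fin r → ℝ × (Fin n → ℝ) → Fin n → ℝ}
    (hind : ∀ (t : ℝ) (x : Fin m → Fin n → ℝ),
      LinearIndependent ℝ (fun j : Fin r =>
        (((1 : ℝ), fun a => Y j (t, x a)) : ℝ × (Fin m → Fin n → ℝ))))
    {b : Fin r → ℝ × (Fin (m + 1) → Fin n → ℝ) → ℝ} {Y₀ : ℝ × (Fin n → ℝ) → Fin n → ℝ}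
    (heq : ∀ p, ∑ j, b j p • timeProlong n m (Y j) p = timeProlong n m Y₀ p)
    (t : ℝ) (x : Fin (m + 1) → Fin n → ℝ) (k : Fin (m + 1)) (v : Fin n → ℝ) (j : Fin r) :
    b j (t, Function.update x k v) = b j (t, x) := by
  have projected : ∀ x' : Fin (m + 1) → Fin n → ℝ, (∀ a, x' (k.succAbove a) = x (k.succAbove a)) →
      ∑ i, b i (t, x') • (((1 : ℝ), fun a => Y i (t, x (k.succAbove a))) :
        ℝ × (Fin m → Fin n → ℝ)) = (1, fun a => Y₀ (t, x (k.succAbove a))) := by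
    intro x' hx'
    have := congrArg (forgetBlock k) (heq (t, x'))
    simpa only [map_sum, map_smul, forgetBlock_timeProlong, hx'] using this
  refine Fintype.linearIndependent_iffₛ.mp (hind t fun a => x (k.succAbove a))
    (fun i => b i (t, Function.update x k v)) (fun i => b i (t, x)) ?_ j
  rw [projected _ fun a => Function.update_of_ne (Fin.succAbove_ne k a) _ _,
    projected x fun _ => rfl]

theorem sum_smul_timeProlong_eq_timeProlong_sum (Y : Fin r → ℝ × (Fin n → ℝ) → Fin n → ℝ)
    {β : Fin r → ℝ → ℝ} (hβ : ∀ t, ∑ j, β j t = 1) (p : ℝ × (Fin (m + 1) → Fin n → ℝ)) :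
    ∑ j, β j p.1 • timeProlong n m (Y j) p
      = timeProlong n m (fun q => ∑ j, β j q.1 • Y j q) p := by
  refine Prod.ext ?_ (funext fun a => ?_)
  · simp [timeProlong, Prod.fst_sum, hβ]
  · simp [timeProlong, Prod.snd_sum, Finset.sum_apply]

end TimeProlong

theorem sum_smul_timeProlong_eq_timeProlong_iff_general (n r m : ℕ)
    (Y : Fin r → ℝ × (Fin n → ℝ) → Fin n → ℝ)
    (hY : ∀ j, ContDiff ℝ (⊤ : ℕ∞) (Y j))
    (hind : ∀ (t : ℝ) (x : Fin m → Fin n → ℝ),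
      LinearIndependent ℝ (fun j : Fin r =>
        (((1 : ℝ), fun a => Y j (t, x a)) : ℝ × (Fin m → Fin n → ℝ))))
    (b : Fin r → ℝ × (Fin (m + 1) → Fin n → ℝ) → ℝ)
    (hb : ∀ j, ContDiff ℝ (⊤ : ℕ∞) (b j)) :
    (∃ Y₀ : ℝ × (Fin n → ℝ) → Fin n → ℝ, ContDiff ℝ (⊤ : ℕ∞) Y₀ ∧
        ∀ p, (∑ j, b j p • timeProlong n m (Y j) p) = timeProlong n m Y₀ p)
      ↔
    (∃ β : Fin r → ℝ → ℝ, (∀ j p, b j p = β j p.1) ∧ ∀ t, ∑ j, β j t = 1) := by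
  constructor
  · rintro ⟨Y₀, -, heq⟩
    have time_only : ∀ j t x, b j (t, x) = b j (t, 0) := fun j t x =>
      apply_eq_of_forall_update_eq (f := fun x => b j (t, x))
        (fun x k v => coeff_update_eq_of_sum_smul_timeProlong_eq hind heq t x k v j) 0 x
    exact ⟨fun j t => b j (t, 0), fun j p => time_only j p.1 p.2,
      fun t => sum_eq_one_of_sum_smul_timeProlong_eq (heq (t, 0))⟩
  · rintro ⟨β, hβ, hsum⟩
    have hβ_smooth : ∀ j, ContDiff ℝ (⊤ : ℕ∞) (β j) := fun j => by
      rw [show β j = fun t => b j (t, 0) from funext fun t => (hβ j (t, 0)).symm]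
      exact (hb j).comp (contDiff_id.prodMk contDiff_const)
    refine ⟨fun q => ∑ j, β j q.1 • Y j q,
      ContDiff.sum fun j _ => ((hβ_smooth j).comp contDiff_fst).smul (hY j), fun p => ?_⟩
    simpa only [hβ] using sum_smul_timeProlong_eq_timeProlong_sum Y hsum p

/-- Let `Y₁, …, Y_r` be smooth time-dependent vector fields on `ℝⁿ` and `m ≥ 1`.  Suppose
that at every point `(t, x₁, …, x_m)` of `ℝ × (ℝⁿ)^m` the projections
`(1, Y_j(t,x₁), …, Y_j(t,x_m))`, `j = 1,…,r`, are linearly independent.  Then, for smooth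
functions `b₁, …, b_r` on `ℝ × (ℝⁿ)^{m+1}`, the vector field `∑_j b_j Ỹ_j` is the
time-prolongation `Ỹ` of some time-dependent vector field `Y` on `ℝⁿ` if and only if each `b_j`
is a function of `t` only and `∑_j b_j ≡ 1`. -/
theorem sum_smul_timeProlong_eq_timeProlong_iff (n r m : ℕ) (hm : 1 ≤ m)
    (Y : Fin r → ℝ × (Fin n → ℝ) → Fin n → ℝ)
    (hY : ∀ j, ContDiff ℝ (⊤ : ℕ∞) (Y j))
    (hind : ∀ (t : ℝ) (x : Fin m → Fin n → ℝ),
      LinearIndependent ℝ (fun j : Fin r =>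
        (((1 : ℝ), fun a => Y j (t, x a)) : ℝ × (Fin m → Fin n → ℝ))))
    (b : Fin r → ℝ × (Fin (m + 1) → Fin n → ℝ) → ℝ)
    (hb : ∀ j, ContDiff ℝ (⊤ : ℕ∞) (b j)) :
    (∃ Y₀ : ℝ × (Fin n → ℝ) → Fin n → ℝ, ContDiff ℝ (⊤ : ℕ∞) Y₀ ∧
        ∀ p, (∑ j, b j p • timeProlong n m (Y j) p) = timeProlong n m Y₀ p)
      ↔
    (∃ β : Fin r → ℝ → ℝ, (∀ j p, b j p = β j p.1) ∧ ∀ t, ∑ j, β j t = 1) :=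
  sum_smul_timeProlong_eq_timeProlong_iff_general n r m Y hY hind b hb
end

section
/- On ℝ² with coordinates (t,x), define the vector fields X̄₁(t,x) = (1, t + x) and X̄₂(t,x) = (1, (1+t)³ + t + (3(1+t)² + 1)x + 3(1+t)x² + x³). Then [X̄₁, X̄₂] = 2(X̄₂ − X̄₁). -/
/-- The autonomization `X̄₁(t,x) = (1, t + x)` of `X₁(t,x) = (t+x)∂/∂x`. -/
def abelX1 : ℝ × ℝ → ℝ × ℝ := fun p => (1, p.1 + p.2)

/-- The autonomization `X̄₂(t,x) = (1, (1+t)³ + t + (3(1+t)² + 1)x + 3(1+t)x² + x³)` of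
`X₂(t,x) = ((1+t)³ + t + (3(1+t)²+1)x + 3(1+t)x² + x³)∂/∂x`. -/
def abelX2 : ℝ × ℝ → ℝ × ℝ := fun p =>
  (1, (1 + p.1) ^ 3 + p.1 + (3 * (1 + p.1) ^ 2 + 1) * p.2
        + 3 * (1 + p.1) * p.2 ^ 2 + p.2 ^ 3)

/-!
Both fields depend on `(t, x)` only through `t + x`: `X̄₁ = (1, s)` and `X̄₂ = (1, (1+s)³ + s)`
with `s = t + x`. In the coordinates `(t, y)`, `y = 1 + t + x`, a field `(1, h(t + x))` becomes
`∂_t + (1 + h(y - 1)) ∂_y`, so `X̄₁ = ∂_t + y ∂_y` and `X̄₂ = ∂_t + (y³ + y) ∂_y`, and the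
claim is the Euler identity `[y ∂_y, y³ ∂_y] = 2 y³ ∂_y`.
-/

def shearField (h : ℝ → ℝ) : ℝ × ℝ → ℝ × ℝ := fun p => (1, h (p.1 + p.2))

theorem hasFDerivAt_shearField {h : ℝ → ℝ} {h' : ℝ} {p : ℝ × ℝ}
    (hh : HasDerivAt h h' (p.1 + p.2)) :
    HasFDerivAt (shearField h)
      ((0 : ℝ × ℝ →L[ℝ] ℝ).prod
        (h' • (ContinuousLinearMap.fst ℝ ℝ ℝ + ContinuousLinearMap.snd ℝ ℝ ℝ))) p :=
  (hasFDerivAt_const 1 p).prodMk (hh.comp_hasFDerivAt p (hasFDerivAt_fst.add hasFDerivAt_snd))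

theorem fderiv_shearField_apply {h : ℝ → ℝ} {h' : ℝ} {p : ℝ × ℝ}
    (hh : HasDerivAt h h' (p.1 + p.2)) (v : ℝ × ℝ) :
    fderiv ℝ (shearField h) p v = (0, h' * (v.1 + v.2)) := by
  simp [(hasFDerivAt_shearField hh).fderiv, mul_add]

theorem lieBr_shearField {f g : ℝ → ℝ} {f' g' : ℝ} {p : ℝ × ℝ}
    (hf : HasDerivAt f f' (p.1 + p.2)) (hg : HasDerivAt g g' (p.1 + p.2)) :
    lieBr (shearField f) (shearField g) p =
      (0, g' * (1 + f (p.1 + p.2)) - f' * (1 + g (p.1 + p.2))) := by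
  simp only [lieBr, fderiv_shearField_apply hf, fderiv_shearField_apply hg, shearField,
    Prod.mk_sub_mk, sub_self]

theorem abelX1_eq_shearField : abelX1 = shearField id := rfl

theorem abelX2_eq_shearField : abelX2 = shearField fun s => (1 + s) ^ 3 + s := by
  funext p
  ext
  · rfl
  · simp only [abelX2, shearField]
    ring

/-- On `ℝ²` with coordinates `(t,x)`, the vector fields `X̄₁(t,x) = (1, t + x)` and
`X̄₂(t,x) = (1, (1+t)³ + t + (3(1+t)² + 1)x + 3(1+t)x² + x³)` satisfy
`[X̄₁, X̄₂] = 2(X̄₂ − X̄₁)`. -/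
theorem abel_bracket : ∀ p : ℝ × ℝ,
    lieBr abelX1 abelX2 p = (2 : ℝ) • (abelX2 p - abelX1 p) := by
  intro p
  have hg : HasDerivAt (fun s : ℝ => (1 + s) ^ 3 + s) (3 * (1 + (p.1 + p.2)) ^ 2 + 1)
      (p.1 + p.2) := by
    refine ((((hasDerivAt_id _).const_add 1).pow 3).add (hasDerivAt_id _)).congr_deriv ?_
    simp
  rw [abelX1_eq_shearField, abelX2_eq_shearField, lieBr_shearField (hasDerivAt_id _) hg]
  ext <;> simp only [shearField, id, Prod.smul_mk, Prod.mk_sub_mk, smul_eq_mul] <;> ring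
end

section
/- Let J ⊆ ℝ be an interval, let b : J → ℝ be continuous, and let x₀, x₁ : J → ℝ be differentiable functions each solving the Abel equation dx/dt = (t + x) + b(t)(1 + t + x)³ on J, with x₀(t) ≠ −t−1 and x₁(t) ≠ −t−1 for all t ∈ J. Then the function t ↦ e^{2t}((x₀(t) + t + 1)^{−2} − (x₁(t) + t + 1)^{−2}) is constant on J. -/
/-!
The substitution `u = x + t + 1` turns the Abel equation into the Bernoulli equation
`u' = u + b u³`, which `y = u⁻²` linearises to `y' = -2y - 2b`. Hence `(e^{2t} y)' = -2 b e^{2t}`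
does not depend on the solution, and the difference of these quantities for two solutions
has zero derivative on the interval `J`.
-/

theorem Convex.eq_of_forall_hasDerivWithinAt_zero {E : Type*} [NormedAddCommGroup E]
    [NormedSpace ℝ E] {f : ℝ → E} {s : Set ℝ} (hs : Convex ℝ s)
    (hf : ∀ x ∈ s, HasDerivWithinAt f 0 s x) {x y : ℝ} (hx : x ∈ s) (hy : y ∈ s) :
    f x = f y := by
  have h := hs.norm_image_sub_le_of_norm_hasDerivWithin_le hf (C := 0) (fun _ _ => by simp) hx hy
  rw [zero_mul, norm_le_zero_iff, sub_eq_zero] at h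
  exact h.symm

theorem HasDerivWithinAt.add_id_add_one_of_abel {x : ℝ → ℝ} {b : ℝ} {s : Set ℝ} {t : ℝ}
    (hx : HasDerivWithinAt x ((t + x t) + b * (1 + t + x t) ^ 3) s t) :
    HasDerivWithinAt (fun t => x t + t + 1)
      ((x t + t + 1) + b * (x t + t + 1) ^ 3) s t :=
  ((hx.add (hasDerivWithinAt_id t s)).add_const 1).congr_deriv (by ring)

theorem HasDerivWithinAt.exp_two_mul_mul_inv_sq_of_bernoulli {u : ℝ → ℝ} {b : ℝ} {s : Set ℝ}
    {t : ℝ} (hu : HasDerivWithinAt u (u t + b * u t ^ 3) s t) (hne : u t ≠ 0) :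
    HasDerivWithinAt (fun t => Real.exp (2 * t) * (u t ^ 2)⁻¹) (-2 * b * Real.exp (2 * t)) s t := by
  have hexp : HasDerivWithinAt (fun t => Real.exp (2 * t)) (Real.exp (2 * t) * 2) s t := by
    simpa using ((hasDerivWithinAt_id t s).const_mul 2).exp
  refine (hexp.mul ((hu.pow 2).inv (pow_ne_zero 2 hne))).congr_deriv ?_
  simp only [Pi.pow_apply, Pi.inv_apply]
  field_simp
  ring

theorem abel_superposition_constant_general (J : Set ℝ) (hJ : J.OrdConnected)
    (b : ℝ → ℝ) (x₀ x₁ : ℝ → ℝ)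
    (h₀ : ∀ t ∈ J, HasDerivWithinAt x₀ ((t + x₀ t) + b t * (1 + t + x₀ t) ^ 3) J t)
    (h₁ : ∀ t ∈ J, HasDerivWithinAt x₁ ((t + x₁ t) + b t * (1 + t + x₁ t) ^ 3) J t)
    (hx₀ : ∀ t ∈ J, x₀ t ≠ -t - 1) (hx₁ : ∀ t ∈ J, x₁ t ≠ -t - 1) :
    ∀ s ∈ J, ∀ t ∈ J,
      Real.exp (2 * s) * (((x₀ s + s + 1) ^ 2)⁻¹ - ((x₁ s + s + 1) ^ 2)⁻¹)
        = Real.exp (2 * t) * (((x₀ t + t + 1) ^ 2)⁻¹ - ((x₁ t + t + 1) ^ 2)⁻¹) := by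
  have invariant_deriv : ∀ x : ℝ → ℝ,
      (∀ t ∈ J, HasDerivWithinAt x ((t + x t) + b t * (1 + t + x t) ^ 3) J t) →
      (∀ t ∈ J, x t ≠ -t - 1) → ∀ t ∈ J,
      HasDerivWithinAt (fun t => Real.exp (2 * t) * ((x t + t + 1) ^ 2)⁻¹)
        (-2 * b t * Real.exp (2 * t)) J t :=
    fun x hx hne t ht =>
      HasDerivWithinAt.exp_two_mul_mul_inv_sq_of_bernoulli (hx t ht).add_id_add_one_of_abel
        fun h => hne t ht (by linarith)
  intro s hs t ht
  simp only [mul_sub]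
  refine hJ.convex.eq_of_forall_hasDerivWithinAt_zero
    (f := fun t =>
      Real.exp (2 * t) * ((x₀ t + t + 1) ^ 2)⁻¹ - Real.exp (2 * t) * ((x₁ t + t + 1) ^ 2)⁻¹)
    (fun τ hτ => ?_) hs ht
  exact ((invariant_deriv x₀ h₀ hx₀ τ hτ).sub (invariant_deriv x₁ h₁ hx₁ τ hτ)).congr_deriv
    (sub_self _)

/-- Let `J ⊆ ℝ` be an interval, `b : J → ℝ` continuous, and let `x₀, x₁` be differentiable
solutions of the Abel equation `dx/dt = (t + x) + b(t)(1 + t + x)³` on `J`, with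
`x₀(t) ≠ −t−1` and `x₁(t) ≠ −t−1` on `J`.  Then
`t ↦ e^{2t}((x₀(t) + t + 1)^{−2} − (x₁(t) + t + 1)^{−2})` is constant on `J`. -/
theorem abel_superposition_constant (J : Set ℝ) (hJ : J.OrdConnected)
    (b : ℝ → ℝ) (hb : ContinuousOn b J) (x₀ x₁ : ℝ → ℝ)
    (h₀ : ∀ t ∈ J, HasDerivWithinAt x₀ ((t + x₀ t) + b t * (1 + t + x₀ t) ^ 3) J t)
    (h₁ : ∀ t ∈ J, HasDerivWithinAt x₁ ((t + x₁ t) + b t * (1 + t + x₁ t) ^ 3) J t)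
    (hx₀ : ∀ t ∈ J, x₀ t ≠ -t - 1) (hx₁ : ∀ t ∈ J, x₁ t ≠ -t - 1) :
    ∀ s ∈ J, ∀ t ∈ J,
      Real.exp (2 * s) * (((x₀ s + s + 1) ^ 2)⁻¹ - ((x₁ s + s + 1) ^ 2)⁻¹)
        = Real.exp (2 * t) * (((x₀ t + t + 1) ^ 2)⁻¹ - ((x₁ t + t + 1) ^ 2)⁻¹) :=
  abel_superposition_constant_general J hJ b x₀ x₁ h₀ h₁ hx₀ hx₁
end

section
/- Let J ⊆ ℝ be an interval, b : J → ℝ continuous, and x₁ : J → ℝ a differentiable solution of dx/dt = (t + x) + b(t)(1 + t + x)³ on J with x₁(t) ≠ −t−1 for all t ∈ J. Let k ∈ ℝ be such that h(t) := (x₁(t) + t + 1)^{−2} + k e^{−2t} > 0 for all t ∈ J. Then x(t) := h(t)^{−1/2} − t − 1 is differentiable and also solves dx/dt = (t + x) + b(t)(1 + t + x)³ on J. (This is the common time-dependent superposition rule x(t) = ((x₁(t)+t+1)^{−2} + k e^{−2t})^{−1/2} − t − 1 for the Lie family of Abel equations.) -/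
/-!
The substitution `u = x + t + 1` turns the Abel equation into the Bernoulli equation
`u' = u + b u³`, and `w = u⁻²` linearises it to `w' = -2 w - 2 b`. Solutions of this linear
equation differ by solutions `k e^{-2t}` of its homogeneous part, so `(x₁ + t + 1)⁻² + k e^{-2t}`
solves it again, and undoing both substitutions gives the new solution `x`.
-/

open Real

namespace HasDerivWithinAt

variable {u w : ℝ → ℝ} {s : Set ℝ} {t a c : ℝ}

theorem inv_sq_of_bernoulli (hu : HasDerivWithinAt u (a * u t + c * u t ^ 3) s t)
    (hu₀ : u t ≠ 0) :
    HasDerivWithinAt (fun x => (u x ^ 2)⁻¹) (-2 * a * (u t ^ 2)⁻¹ - 2 * c) s t := by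
  refine ((hu.fun_pow 2).fun_inv (pow_ne_zero 2 hu₀)).congr_deriv ?_
  field_simp
  ring

theorem add_const_mul_exp {r : ℝ} (hw : HasDerivWithinAt w (r * w t + c) s t) (k : ℝ) :
    HasDerivWithinAt (fun x => w x + k * Real.exp (r * x))
      (r * (w t + k * Real.exp (r * t)) + c) s t := by
  have hexp : HasDerivWithinAt (fun x => k * Real.exp (r * x)) (k * (Real.exp (r * t) * r)) s t :=
    (((hasDerivWithinAt_id t s).const_mul r).congr_deriv (mul_one r)).exp.const_mul k
  exact (hw.add hexp).congr_deriv (by ring)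

theorem inv_sqrt_of_linear (hw : HasDerivWithinAt w (-2 * a * w t - 2 * c) s t)
    (hw₀ : 0 < w t) :
    HasDerivWithinAt (fun x => (√(w x))⁻¹) (a * (√(w t))⁻¹ + c * (√(w t))⁻¹ ^ 3) s t := by
  have hsqrt₀ : 0 < √(w t) := sqrt_pos.mpr hw₀
  refine ((hw.sqrt hw₀.ne').fun_inv hsqrt₀.ne').congr_deriv ?_
  have hsq : √(w t) ^ 2 = w t := sq_sqrt hw₀.le
  set S := √(w t)
  rw [← hsq]
  field_simp
  ring

end HasDerivWithinAt

theorem abel_superposition_rule_general (J : Set ℝ)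
    (b : ℝ → ℝ) (x₁ : ℝ → ℝ)
    (h₁ : ∀ t ∈ J, HasDerivWithinAt x₁ ((t + x₁ t) + b t * (1 + t + x₁ t) ^ 3) J t)
    (hx₁ : ∀ t ∈ J, x₁ t ≠ -t - 1) (k : ℝ)
    (hk : ∀ t ∈ J, 0 < ((x₁ t + t + 1) ^ 2)⁻¹ + k * Real.exp (-2 * t)) :
    ∀ t ∈ J, HasDerivWithinAt
      (fun s => (Real.sqrt (((x₁ s + s + 1) ^ 2)⁻¹ + k * Real.exp (-2 * s)))⁻¹ - s - 1)
      ((t + ((Real.sqrt (((x₁ t + t + 1) ^ 2)⁻¹ + k * Real.exp (-2 * t)))⁻¹ - t - 1))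
        + b t * (1 + t
          + ((Real.sqrt (((x₁ t + t + 1) ^ 2)⁻¹ + k * Real.exp (-2 * t)))⁻¹ - t - 1)) ^ 3)
      J t := by
  intro t ht
  have hu : HasDerivWithinAt (fun s => x₁ s + s + 1)
      (1 * (x₁ t + t + 1) + b t * (x₁ t + t + 1) ^ 3) J t :=
    (((h₁ t ht).add (hasDerivWithinAt_id t J)).add_const 1).congr_deriv (by ring)
  have hu₀ : x₁ t + t + 1 ≠ 0 := fun h => hx₁ t ht (by linarith)
  have hw := (hu.inv_sq_of_bernoulli hu₀).congr_deriv
    (show _ = -2 * ((x₁ t + t + 1) ^ 2)⁻¹ + -2 * b t by ring)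
  have hh := (hw.add_const_mul_exp k).congr_deriv
    (show _ = -2 * 1 * (((x₁ t + t + 1) ^ 2)⁻¹ + k * exp (-2 * t)) - 2 * b t by ring)
  refine (((hh.inv_sqrt_of_linear (hk t ht)).fun_sub (hasDerivWithinAt_id t J)).sub_const 1
    ).congr_deriv ?_
  ring

/-- The common time-dependent superposition rule for the Lie family of Abel equations
`dx/dt = (t + x) + b(t)(1 + t + x)³`: if `x₁` is a solution on an interval `J` with
`x₁(t) ≠ −t−1`, and `k ∈ ℝ` is such that `h(t) = (x₁(t) + t + 1)^{−2} + k e^{−2t} > 0` on `J`,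
then `x(t) = h(t)^{−1/2} − t − 1` is differentiable and is again a solution on `J`. -/
theorem abel_superposition_rule (J : Set ℝ) (hJ : J.OrdConnected)
    (b : ℝ → ℝ) (hb : ContinuousOn b J) (x₁ : ℝ → ℝ)
    (h₁ : ∀ t ∈ J, HasDerivWithinAt x₁ ((t + x₁ t) + b t * (1 + t + x₁ t) ^ 3) J t)
    (hx₁ : ∀ t ∈ J, x₁ t ≠ -t - 1) (k : ℝ)
    (hk : ∀ t ∈ J, 0 < ((x₁ t + t + 1) ^ 2)⁻¹ + k * Real.exp (-2 * t)) :
    ∀ t ∈ J, HasDerivWithinAt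
      (fun s => (Real.sqrt (((x₁ s + s + 1) ^ 2)⁻¹ + k * Real.exp (-2 * s)))⁻¹ - s - 1)
      ((t + ((Real.sqrt (((x₁ t + t + 1) ^ 2)⁻¹ + k * Real.exp (-2 * t)))⁻¹ - t - 1))
        + b t * (1 + t
          + ((Real.sqrt (((x₁ t + t + 1) ^ 2)⁻¹ + k * Real.exp (-2 * t)))⁻¹ - t - 1)) ^ 3)
      J t :=
  abel_superposition_rule_general J b x₁ h₁ hx₁ k hk
end

section
/- Let G : ℝ³ → ℝ be continuously differentiable (coordinates (t, x₀, x₁)) and suppose ∂G/∂t + (t + x₀)∂G/∂x₀ + (t + x₁)∂G/∂x₁ = 0 everywhere. Then there exists a function G₂ : ℝ² → ℝ such that G(t, x₀, x₁) = G₂(e^{−t}(x₀ + t + 1), e^{−t}(x₁ + t + 1)) for all (t, x₀, x₁) ∈ ℝ³. -/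
/-! The characteristics of `∂ₜ + (t + x₀)∂ₓ₀ + (t + x₁)∂ₓ₁` are the curves
`s ↦ (s, ξ₀eˢ - s - 1, ξ₁eˢ - s - 1)`, with `ξᵢ = e^{-t}(xᵢ + t + 1)` constant along them.
A first integral `G` is constant along each characteristic, so `G(t, x₀, x₁)` equals its value
`G(0, ξ₀ - 1, ξ₁ - 1)` where the characteristic through `(t, x₀, x₁)` meets `t = 0`. -/

open Real

theorem apply_eq_of_fderiv_apply_vectorField_eq_zero {E F : Type*}
    [NormedAddCommGroup E] [NormedSpace ℝ E] [NormedAddCommGroup F] [NormedSpace ℝ F]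
    {G : E → F} (hG : Differentiable ℝ G) {V : E → E} (hV : ∀ p, fderiv ℝ G p (V p) = 0)
    {c : ℝ → E} (hc : ∀ s, HasDerivAt c (V (c s)) s) (s t : ℝ) :
    G (c s) = G (c t) := by
  have hGc : ∀ u, HasDerivAt (G ∘ c) 0 u := fun u => by
    simpa [hV] using (hG (c u)).hasFDerivAt.comp_hasDerivAt u (hc u)
  exact is_const_of_deriv_eq_zero (fun u => (hGc u).differentiableAt) (fun u => (hGc u).deriv) s t

namespace Abel

def vectorField (p : ℝ × ℝ × ℝ) : ℝ × ℝ × ℝ := (1, p.1 + p.2.1, p.1 + p.2.2)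

noncomputable def characteristic (ξ₀ ξ₁ s : ℝ) : ℝ × ℝ × ℝ := (s, ξ₀ * exp s - s - 1, ξ₁ * exp s - s - 1)

noncomputable def invariants (p : ℝ × ℝ × ℝ) : ℝ × ℝ :=
  (exp (-p.1) * (p.2.1 + p.1 + 1), exp (-p.1) * (p.2.2 + p.1 + 1))

theorem fderiv_apply_vectorField (G : ℝ × ℝ × ℝ → ℝ) (p : ℝ × ℝ × ℝ) :
    fderiv ℝ G p (vectorField p) = fderiv ℝ G p (1, 0, 0)
      + (p.1 + p.2.1) * fderiv ℝ G p (0, 1, 0) + (p.1 + p.2.2) * fderiv ℝ G p (0, 0, 1) := by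
  have hV : vectorField p
      = (1, 0, 0) + (p.1 + p.2.1) • ((0 : ℝ), (1 : ℝ), (0 : ℝ))
        + (p.1 + p.2.2) • ((0 : ℝ), (0 : ℝ), (1 : ℝ)) := by
    simp [vectorField]
  rw [hV, map_add, map_add, map_smul, map_smul, smul_eq_mul, smul_eq_mul]

theorem hasDerivAt_characteristic (ξ₀ ξ₁ s : ℝ) :
    HasDerivAt (characteristic ξ₀ ξ₁) (vectorField (characteristic ξ₀ ξ₁ s)) s := by
  have hx : ∀ ξ : ℝ, HasDerivAt (fun s => ξ * exp s - s - 1) (ξ * exp s - 1) s := fun ξ =>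
    (((hasDerivAt_exp s).const_mul ξ).sub (hasDerivAt_id s)).sub_const 1
  refine ((hasDerivAt_id s).prodMk ((hx ξ₀).prodMk (hx ξ₁))).congr_deriv ?_
  simp only [vectorField, characteristic, Prod.mk.injEq, true_and]
  constructor <;> ring

theorem characteristic_invariants (p : ℝ × ℝ × ℝ) :
    characteristic (invariants p).1 (invariants p).2 p.1 = p := by
  obtain ⟨t, x₀, x₁⟩ := p
  have hx : ∀ x : ℝ, exp (-t) * (x + t + 1) * exp t - t - 1 = x := fun x => by
    rw [mul_right_comm, ← exp_add, neg_add_cancel, exp_zero]; ring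
  simp only [characteristic, invariants, hx]

theorem characteristic_zero (ξ₀ ξ₁ : ℝ) :
    characteristic ξ₀ ξ₁ 0 = (0, ξ₀ - 1, ξ₁ - 1) := by
  simp [characteristic]

end Abel

open Abel in
/-- First characteristics reduction for the Lie family of Abel equations: if `G : ℝ³ → ℝ`
(coordinates `(t,x₀,x₁)`) is `C¹` and satisfies
`∂G/∂t + (t + x₀)∂G/∂x₀ + (t + x₁)∂G/∂x₁ = 0` everywhere, then there is `G₂ : ℝ² → ℝ`
with `G(t, x₀, x₁) = G₂(e^{−t}(x₀ + t + 1), e^{−t}(x₁ + t + 1))` for all `(t,x₀,x₁)`. -/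
theorem abel_characteristics_one (G : ℝ × ℝ × ℝ → ℝ) (hG : ContDiff ℝ 1 G)
    (h : ∀ p : ℝ × ℝ × ℝ,
      fderiv ℝ G p (1, 0, 0)
        + (p.1 + p.2.1) * fderiv ℝ G p (0, 1, 0)
        + (p.1 + p.2.2) * fderiv ℝ G p (0, 0, 1) = 0) :
    ∃ G₂ : ℝ × ℝ → ℝ, ∀ p : ℝ × ℝ × ℝ,
      G p = G₂ (Real.exp (-p.1) * (p.2.1 + p.1 + 1), Real.exp (-p.1) * (p.2.2 + p.1 + 1)) := by
  refine ⟨fun ξ => G (0, ξ.1 - 1, ξ.2 - 1), fun p => ?_⟩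
  have hV : ∀ q, fderiv ℝ G q (vectorField q) = 0 := fun q => by
    rw [fderiv_apply_vectorField, h]
  have hconst := apply_eq_of_fderiv_apply_vectorField_eq_zero (hG.differentiable one_ne_zero) hV
    (hasDerivAt_characteristic (invariants p).1 (invariants p).2) p.1 0
  rwa [characteristic_invariants, characteristic_zero] at hconst
end

section
/- Let G₂ : ℝ² → ℝ be continuously differentiable (coordinates (ξ₀, ξ₁)) and suppose ξ₀³ ∂G₂/∂ξ₀ + ξ₁³ ∂G₂/∂ξ₁ = 0 at every point of the quadrant Q = {(ξ₀, ξ₁) : ξ₀ > 0, ξ₁ > 0}. Then there exists a function G₃ : ℝ → ℝ such that G₂(ξ₀, ξ₁) = G₃(ξ₀^{−2} − ξ₁^{−2}) for all (ξ₀, ξ₁) ∈ Q. -/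
/-!
In the coordinates `u = ξ₀⁻²`, `v = ξ₁⁻²` the vector field `ξ₀³ ∂/∂ξ₀ + ξ₁³ ∂/∂ξ₁` becomes the
constant field `-2 (∂/∂u + ∂/∂v)`. Its integral curves `s ↦ (u + s, v + s)` meet the quadrant in
intervals, so a first integral is constant on each of them and hence a function of `u - v`.
-/

open Real Set

noncomputable def invSqrtPair (q : ℝ × ℝ) : ℝ × ℝ := ((√q.1)⁻¹, (√q.2)⁻¹)

lemma invSqrtPair_inv_sq {p : ℝ × ℝ} (h₁ : 0 < p.1) (h₂ : 0 < p.2) :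
    invSqrtPair ((p.1 ^ 2)⁻¹, (p.2 ^ 2)⁻¹) = p := by
  simp only [invSqrtPair, sqrt_inv, sqrt_sq h₁.le, sqrt_sq h₂.le, inv_inv]

lemma hasDerivAt_inv_sqrt {u : ℝ} (hu : 0 < u) :
    HasDerivAt (fun u : ℝ => (√u)⁻¹) (-(1 / 2) * (√u)⁻¹ ^ 3) u := by
  have hsqrt : √u ≠ 0 := (sqrt_pos.2 hu).ne'
  refine ((hasDerivAt_sqrt hu.ne').inv hsqrt).congr_deriv ?_
  rw [← sq_sqrt hu.le]
  field_simp

lemma hasDerivAt_invSqrtPair_diagonal {u v s : ℝ} (hu : 0 < u + s) (hv : 0 < v + s) :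
    HasDerivAt (fun s : ℝ => invSqrtPair (u + s, v + s))
      (-(1 / 2) * (√(u + s))⁻¹ ^ 3, -(1 / 2) * (√(v + s))⁻¹ ^ 3) s :=
  ((hasDerivAt_inv_sqrt hu).comp_const_add u s).prodMk
    ((hasDerivAt_inv_sqrt hv).comp_const_add v s)

lemma apply_invSqrtPair_eq_of_sub_eq {G : ℝ × ℝ → ℝ}
    (hG : ∀ p : ℝ × ℝ, 0 < p.1 → 0 < p.2 → DifferentiableAt ℝ G p)
    (h : ∀ p : ℝ × ℝ, 0 < p.1 → 0 < p.2 →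
      p.1 ^ 3 * fderiv ℝ G p (1, 0) + p.2 ^ 3 * fderiv ℝ G p (0, 1) = 0)
    {u v u' v' : ℝ} (hu : 0 < u) (hv : 0 < v) (hu' : 0 < u') (hv' : 0 < v')
    (huv : u - v = u' - v') :
    G (invSqrtPair (u, v)) = G (invSqrtPair (u', v')) := by
  have mem_Ioi_iff {s : ℝ} : s ∈ Ioi (max (-u) (-v)) ↔ 0 < u + s ∧ 0 < v + s := by
    simp only [mem_Ioi, max_lt_iff, neg_lt_iff_pos_add']
  have deriv_zero : ∀ s ∈ Ioi (max (-u) (-v)),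
      HasDerivAt (fun s : ℝ => G (invSqrtPair (u + s, v + s))) 0 s := by
    intro s hs
    obtain ⟨hus, hvs⟩ := mem_Ioi_iff.1 hs
    set q := invSqrtPair (u + s, v + s)
    have hq₁ : 0 < q.1 := inv_pos.2 (sqrt_pos.2 hus)
    have hq₂ : 0 < q.2 := inv_pos.2 (sqrt_pos.2 hvs)
    refine ((hG q hq₁ hq₂).hasFDerivAt.comp_hasDerivAt s
      (hasDerivAt_invSqrtPair_diagonal hus hvs)).congr_deriv ?_
    have hsplit : ((-(1 / 2) * q.1 ^ 3, -(1 / 2) * q.2 ^ 3) : ℝ × ℝ) =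
        (-(1 / 2) * q.1 ^ 3) • (1, 0) + (-(1 / 2) * q.2 ^ 3) • (0, 1) := by
      simp
    change fderiv ℝ G q (-(1 / 2) * q.1 ^ 3, -(1 / 2) * q.2 ^ 3) = 0
    rw [hsplit, map_add, map_smul, map_smul, smul_eq_mul, smul_eq_mul]
    linear_combination -(1 / 2) * h q hq₁ hq₂
  have hconst := isOpen_Ioi.is_const_of_deriv_eq_zero isPreconnected_Ioi
    (fun s hs => (deriv_zero s hs).differentiableAt.differentiableWithinAt)
    (fun s hs => (deriv_zero s hs).deriv) ((mem_Ioi_iff (s := 0)).2 ⟨by linarith, by linarith⟩)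
    ((mem_Ioi_iff (s := u' - u)).2 ⟨by linarith, by linarith⟩)
  rwa [add_zero, add_zero, add_sub_cancel, show v + (u' - u) = v' by linarith] at hconst

/-- Second characteristics reduction for the Lie family of Abel equations: if `G₂ : ℝ² → ℝ`
(coordinates `(ξ₀,ξ₁)`) is `C¹` and satisfies `ξ₀³ ∂G₂/∂ξ₀ + ξ₁³ ∂G₂/∂ξ₁ = 0` on the
quadrant `Q = {ξ₀ > 0, ξ₁ > 0}`, then there is `G₃ : ℝ → ℝ` with
`G₂(ξ₀, ξ₁) = G₃(ξ₀^{−2} − ξ₁^{−2})` on `Q`. -/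
theorem abel_characteristics_two (G₂ : ℝ × ℝ → ℝ) (hG₂ : ContDiff ℝ 1 G₂)
    (h : ∀ p : ℝ × ℝ, 0 < p.1 → 0 < p.2 →
      p.1 ^ 3 * fderiv ℝ G₂ p (1, 0) + p.2 ^ 3 * fderiv ℝ G₂ p (0, 1) = 0) :
    ∃ G₃ : ℝ → ℝ, ∀ p : ℝ × ℝ, 0 < p.1 → 0 < p.2 →
      G₂ p = G₃ ((p.1 ^ 2)⁻¹ - (p.2 ^ 2)⁻¹) := by
  refine ⟨fun c => G₂ (invSqrtPair (c + (|c| + 1), |c| + 1)), fun p h₁ h₂ => ?_⟩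
  set c := (p.1 ^ 2)⁻¹ - (p.2 ^ 2)⁻¹
  have hc : 0 < c + (|c| + 1) := by linarith [neg_abs_le c]
  conv_lhs => rw [← invSqrtPair_inv_sq h₁ h₂]
  exact apply_invSqrtPair_eq_of_sub_eq (fun p _ _ => hG₂.differentiable one_ne_zero p) h
    (by positivity) (by positivity) hc (by positivity) (by ring)
end

section
/- Let J ⊆ ℝ be an interval, F : J → ℝ twice continuously differentiable, ω : J → ℝ continuous, and let x₁, x₂ : J → ℝ be twice differentiable nowhere-vanishing functions each solving the dissipative Milne–Pinney equation ẍ = −F'(t)ẋ + ω²(t)x + e^{−2F(t)}x^{−3} on J. Then the function t ↦ e^{2F(t)}(x₁(t)ẋ₂(t) − x₂(t)ẋ₁(t))² + (x₁(t)/x₂(t))² + (x₂(t)/x₁(t))² is constant on J. -/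
/-!
Write `W = x₁ẋ₂ − x₂ẋ₁` for the Wronskian. Subtracting the two equations multiplied crosswise
gives `Ẇ = −F'W + e^{−2F}(x₁/x₂³ − x₂/x₁³)`: the linear terms `ω²x` cancel and the damping
becomes the factor `e^{2F}` of `(e^{2F}W²)˙ = 2W(x₁/x₂³ − x₂/x₁³)`. On the other hand
`((x₁/x₂)²)˙ = −2W x₁/x₂³` and `((x₂/x₁)²)˙ = 2W x₂/x₁³`, so the sum has zero derivative
and is constant on the interval `J` by the mean value inequality.
-/

open Real

theorem Set.OrdConnected.eq_of_hasDerivWithinAt_zero {J : Set ℝ} (hJ : J.OrdConnected)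
    {G : ℝ → ℝ} (hG : ∀ t ∈ J, HasDerivWithinAt G 0 J t) {s t : ℝ} (hs : s ∈ J) (ht : t ∈ J) :
    G s = G t := by
  have h := (convex_iff_ordConnected.mpr hJ).norm_image_sub_le_of_norm_hasDerivWithin_le
    (C := 0) hG (fun _ _ => by simp) ht hs
  rw [zero_mul, norm_le_zero_iff, sub_eq_zero] at h
  exact h

section Wronskian

variable {J : Set ℝ} {t : ℝ} {x₁ x₂ v₁ v₂ : ℝ → ℝ}

def wronskian (x₁ x₂ v₁ v₂ : ℝ → ℝ) (t : ℝ) : ℝ := x₁ t * v₂ t - x₂ t * v₁ t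

theorem hasDerivWithinAt_wronskian {a b r₁ r₂ : ℝ}
    (hx₁ : HasDerivWithinAt x₁ (v₁ t) J t) (hx₂ : HasDerivWithinAt x₂ (v₂ t) J t)
    (hv₁ : HasDerivWithinAt v₁ (a * v₁ t + b * x₁ t + r₁) J t)
    (hv₂ : HasDerivWithinAt v₂ (a * v₂ t + b * x₂ t + r₂) J t) :
    HasDerivWithinAt (wronskian x₁ x₂ v₁ v₂)
      (a * wronskian x₁ x₂ v₁ v₂ t + (x₁ t * r₂ - x₂ t * r₁)) J t := by
  refine ((hx₁.mul hv₂).sub (hx₂.mul hv₁)).congr_deriv ?_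
  simp only [wronskian]
  ring

theorem hasDerivWithinAt_exp_two_mul_mul_sq {F W : ℝ → ℝ} {F' r : ℝ}
    (hF : HasDerivWithinAt F F' J t)
    (hW : HasDerivWithinAt W (-F' * W t + exp (-(2 * F t)) * r) J t) :
    HasDerivWithinAt (fun t => exp (2 * F t) * W t ^ 2) (2 * W t * r) J t := by
  refine (((hF.const_mul 2).exp).mul (hW.pow 2)).congr_deriv ?_
  rw [Pi.pow_apply, exp_neg]
  field_simp
  ring

theorem hasDerivWithinAt_div_sq (hx₁ : HasDerivWithinAt x₁ (v₁ t) J t)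
    (hx₂ : HasDerivWithinAt x₂ (v₂ t) J t) (hx₂t : x₂ t ≠ 0) :
    HasDerivWithinAt (fun t => (x₁ t / x₂ t) ^ 2)
      (-2 * wronskian x₁ x₂ v₁ v₂ t * (x₁ t / x₂ t ^ 3)) J t := by
  refine ((hx₁.div hx₂ hx₂t).pow 2).congr_deriv ?_
  simp only [wronskian, Pi.div_apply]
  norm_num
  field_simp
  ring

end Wronskian

theorem mp_first_integral_constant_general (J : Set ℝ) (hJ : J.OrdConnected)
    (F : ℝ → ℝ) (hF : ContDiff ℝ 2 F) (ω : ℝ → ℝ)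
    (x₁ x₂ v₁ v₂ : ℝ → ℝ)
    (hx₁ : ∀ t ∈ J, x₁ t ≠ 0) (hx₂ : ∀ t ∈ J, x₂ t ≠ 0)
    (hx₁' : ∀ t ∈ J, HasDerivWithinAt x₁ (v₁ t) J t)
    (hx₂' : ∀ t ∈ J, HasDerivWithinAt x₂ (v₂ t) J t)
    (hv₁' : ∀ t ∈ J, HasDerivWithinAt v₁
      (-(deriv F t) * v₁ t + (ω t) ^ 2 * x₁ t + Real.exp (-(2 * F t)) * ((x₁ t) ^ 3)⁻¹) J t)
    (hv₂' : ∀ t ∈ J, HasDerivWithinAt v₂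
      (-(deriv F t) * v₂ t + (ω t) ^ 2 * x₂ t + Real.exp (-(2 * F t)) * ((x₂ t) ^ 3)⁻¹) J t) :
    ∀ s ∈ J, ∀ t ∈ J,
      Real.exp (2 * F s) * (x₁ s * v₂ s - x₂ s * v₁ s) ^ 2
          + (x₁ s / x₂ s) ^ 2 + (x₂ s / x₁ s) ^ 2
        = Real.exp (2 * F t) * (x₁ t * v₂ t - x₂ t * v₁ t) ^ 2
          + (x₁ t / x₂ t) ^ 2 + (x₂ t / x₁ t) ^ 2 := by
  intro s hs t ht
  refine hJ.eq_of_hasDerivWithinAt_zero (G := fun t => exp (2 * F t) * wronskian x₁ x₂ v₁ v₂ t ^ 2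
    + (x₁ t / x₂ t) ^ 2 + (x₂ t / x₁ t) ^ 2) (fun t ht => ?_) hs ht
  have hFt : HasDerivWithinAt F (deriv F t) J t :=
    ((hF.differentiable two_ne_zero) t).hasDerivAt.hasDerivWithinAt
  have hW := hasDerivWithinAt_wronskian (hx₁' t ht) (hx₂' t ht) (hv₁' t ht) (hv₂' t ht)
  have hE := hasDerivWithinAt_exp_two_mul_mul_sq (r := x₁ t / x₂ t ^ 3 - x₂ t / x₁ t ^ 3) hFt
    (hW.congr_deriv (by ring))
  have h₁₂ := hasDerivWithinAt_div_sq (hx₁' t ht) (hx₂' t ht) (hx₂ t ht)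
  have h₂₁ := hasDerivWithinAt_div_sq (hx₂' t ht) (hx₁' t ht) (hx₁ t ht)
  refine ((hE.add h₁₂).add h₂₁).congr_deriv ?_
  simp only [wronskian]
  ring

/-- Let `J ⊆ ℝ` be an interval, `F` twice continuously differentiable, `ω` continuous, and
let `x₁, x₂` (with derivatives `v₁, v₂`) be twice differentiable nowhere-vanishing solutions
of the dissipative Milne–Pinney equation `ẍ = −F'(t)ẋ + ω²(t)x + e^{−2F(t)}x^{−3}` on `J`.
Then `t ↦ e^{2F(t)}(x₁ẋ₂ − x₂ẋ₁)² + (x₁/x₂)² + (x₂/x₁)²` is constant on `J`. -/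
theorem mp_first_integral_constant (J : Set ℝ) (hJ : J.OrdConnected)
    (F : ℝ → ℝ) (hF : ContDiff ℝ 2 F) (ω : ℝ → ℝ) (hω : ContinuousOn ω J)
    (x₁ x₂ v₁ v₂ : ℝ → ℝ)
    (hx₁ : ∀ t ∈ J, x₁ t ≠ 0) (hx₂ : ∀ t ∈ J, x₂ t ≠ 0)
    (hx₁' : ∀ t ∈ J, HasDerivWithinAt x₁ (v₁ t) J t)
    (hx₂' : ∀ t ∈ J, HasDerivWithinAt x₂ (v₂ t) J t)
    (hv₁' : ∀ t ∈ J, HasDerivWithinAt v₁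
      (-(deriv F t) * v₁ t + (ω t) ^ 2 * x₁ t + Real.exp (-(2 * F t)) * ((x₁ t) ^ 3)⁻¹) J t)
    (hv₂' : ∀ t ∈ J, HasDerivWithinAt v₂
      (-(deriv F t) * v₂ t + (ω t) ^ 2 * x₂ t + Real.exp (-(2 * F t)) * ((x₂ t) ^ 3)⁻¹) J t) :
    ∀ s ∈ J, ∀ t ∈ J,
      Real.exp (2 * F s) * (x₁ s * v₂ s - x₂ s * v₁ s) ^ 2
          + (x₁ s / x₂ s) ^ 2 + (x₂ s / x₁ s) ^ 2
        = Real.exp (2 * F t) * (x₁ t * v₂ t - x₂ t * v₁ t) ^ 2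
          + (x₁ t / x₂ t) ^ 2 + (x₂ t / x₁ t) ^ 2 :=
  mp_first_integral_constant_general J hJ F hF ω x₁ x₂ v₁ v₂ hx₁ hx₂ hx₁' hx₂' hv₁' hv₂'
end
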